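/- arXiv:2403.01333 — 4 statements merged into one kernel-verified Lean document; each statement's English description precedes it below -/
import Mathlib

section
/- Let n_x, n_u, n_d, n_z be positive natural numbers, A ∈ ℝ^{n_x×n_x}, B_u ∈ ℝ^{n_x×n_u}, B_d ∈ ℝ^{n_x×n_d}, C_z ∈ ℝ^{n_z×n_x}, let W_d ∈ ℝ^{n_d×n_d} be an invertible diagonal matrix, and let γ > 0. Suppose there exist a symmetric positive definite Y ∈ ℝ^{n_x×n_x}, a matrix V ∈ ℝ^{n_u×n_x}, and vectors ω_c, κ ∈ ℝ^{n_u} with strictly positive entries such that, with P := [[Y·A, Y·B_u],[V, −diag(ω_c)]], the symmetric block matrix [[P + Pᵀ, [[Y·B_d, Y·B_u],[0, 0]], [[C_zᵀ],[0]]], [∗, −γ·blockdiag(W_d⁻², diag(κ)), 0], [∗, ∗, −γ·I]] is negative definite. Define K := diag(ω_c)⁻¹·V, A_cl := [[A, B_u],[diag(ω_c)·K, −diag(ω_c)]] ∈ ℝ^{(n_x+n_u)×(n_x+n_u)}, B_cl := [[B_d·W_d, B_u·diag(κ)^{−1/2}],[0, 0]] ∈ ℝ^{(n_x+n_u)×(n_d+n_u)},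 C_cl := [C_z, 0] ∈ ℝ^{n_z×(n_x+n_u)}. Then A_cl is Hurwitz, and for every ω ∈ ℝ the complex matrix iω·I − A_cl is invertible and the spectral norm of C_cl·(iω·I − A_cl)⁻¹·B_cl is at most γ. -/
open Matrix
open scoped Matrix.Norms.L2Operator

noncomputable section

set_option linter.unusedSectionVars false
set_option maxHeartbeats 1000000


section Helpers
variable {l m n : Type*} [Fintype l] [Fintype m] [Fintype n]

lemma mapC_mul (M : Matrix l m ℝ) (N : Matrix m n ℝ) :
    (M*N).map Complex.ofReal = M.map Complex.ofReal * N.map Complex.ofReal :=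
  Matrix.map_mul (f := Complex.ofRealHom)

lemma mapC_add (M N : Matrix m n ℝ) :
    (M+N).map Complex.ofReal = M.map Complex.ofReal + N.map Complex.ofReal :=
  Matrix.map_add Complex.ofRealHom (by simp) M N

lemma mapC_transpose (M : Matrix m n ℝ) :
    (Mᵀ).map Complex.ofReal = (M.map Complex.ofReal)ᵀ := by
  ext i j; simp

lemma mapC_conjTranspose (M : Matrix m n ℝ) :
    (M.map Complex.ofReal)ᴴ = (Mᵀ).map Complex.ofReal := by
  ext i j; simp [conjTranspose_apply, Complex.conj_ofReal]

lemma mapC_one [DecidableEq n] : (1 : Matrix n n ℝ).map Complex.ofReal = 1 :=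
  Matrix.map_one _ Complex.ofReal_zero Complex.ofReal_one

lemma mapC_neg_smul (r : ℝ) (M : Matrix m n ℝ) :
    (-(r • M)).map Complex.ofReal = -((r:ℂ) • M.map Complex.ofReal) := by
  ext i j; simp

lemma fromColumns_mapC (A : Matrix l m ℝ) (B : Matrix l n ℝ) :
    (fromCols A B).map Complex.ofReal
      = fromCols (A.map Complex.ofReal) (B.map Complex.ofReal) := by
  exact fromCols_map _ _ _

lemma fromRows_mapC (A : Matrix m n ℝ) (B : Matrix l n ℝ) :
    (fromRows A B).map Complex.ofReal
      = fromRows (A.map Complex.ofReal) (B.map Complex.ofReal) := by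
  exact fromRows_map _ _ _

/-- shift a real matrix across the hermitian pairing -/
lemma dot_shift (M : Matrix m n ℝ) (x : n → ℂ) (y : m → ℂ) :
    star x ⬝ᵥ ((Mᵀ).map Complex.ofReal) *ᵥ y = star (M.map Complex.ofReal *ᵥ x) ⬝ᵥ y := by
  rw [star_mulVec, mapC_conjTranspose, dotProduct_mulVec]

lemma re_dot_mapC (N : Matrix n n ℝ) (z : n → ℂ) :
    (star z ⬝ᵥ (N.map Complex.ofReal) *ᵥ z).re
      = (fun i => (z i).re) ⬝ᵥ N *ᵥ (fun i => (z i).re)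
        + (fun i => (z i).im) ⬝ᵥ N *ᵥ (fun i => (z i).im) := by
  simp only [dotProduct, mulVec, Complex.re_sum, Finset.mul_sum, map_apply, Pi.star_apply,
    RCLike.star_def, Finset.sum_add_distrib ]
  rw [← Finset.sum_add_distrib]
  refine Finset.sum_congr rfl fun i _ => ?_
  rw [← Finset.sum_add_distrib]
  refine Finset.sum_congr rfl fun j _ => ?_
  simp only [Complex.mul_re, Complex.mul_im, Complex.conj_re, Complex.conj_im, Complex.ofReal_re,
    Complex.ofReal_im]
  ring

lemma re_star_dot_self (y : n → ℂ) : (star y ⬝ᵥ y).re = ∑ i, ‖y i‖^2 := by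
  simp only [dotProduct, Pi.star_apply, RCLike.star_def, Complex.re_sum]
  refine Finset.sum_congr rfl fun i _ => ?_
  simp only [Complex.mul_re, Complex.conj_re, Complex.conj_im,
    Complex.sq_norm, Complex.normSq_apply]
  ring

lemma star_dot_self_re_nonneg (y : n → ℂ) : 0 ≤ (star y ⬝ᵥ y).re := by
  rw [re_star_dot_self]; positivity

lemma star_dot_self_re_pos {y : n → ℂ} (hy : y ≠ 0) : 0 < (star y ⬝ᵥ y).re := by
  rw [re_star_dot_self]
  obtain ⟨i, hi⟩ : ∃ i, y i ≠ 0 := by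
    by_contra h; push_neg at h; exact hy (funext h)
  refine Finset.sum_pos' (fun j _ => by positivity) ⟨i, Finset.mem_univ i, ?_⟩
  have := norm_pos_iff.mpr hi
  positivity

lemma posdef_re_dot_mapC {Q : Matrix n n ℝ} (hQ : Q.PosDef) {z : n → ℂ} (hz : z ≠ 0) :
    0 < (star z ⬝ᵥ (Q.map Complex.ofReal) *ᵥ z).re := by
  rw [re_dot_mapC]
  set a : n → ℝ := fun i => (z i).re
  set b : n → ℝ := fun i => (z i).im
  have hab : a ≠ 0 ∨ b ≠ 0 := by
    by_contra h
    push_neg at h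
    apply hz
    funext i
    have h1 := congrFun h.1 i
    have h2 := congrFun h.2 i
    simp only [a, b, Pi.zero_apply] at h1 h2
    exact Complex.ext h1 h2
  rcases hab with h | h
  · have := hQ.dotProduct_mulVec_pos h
    have h2 : 0 ≤ star b ⬝ᵥ Q *ᵥ b := hQ.posSemidef.dotProduct_mulVec_nonneg b
    simp only [star_trivial] at *
    linarith
  · have := hQ.dotProduct_mulVec_pos h
    have h2 : 0 ≤ star a ⬝ᵥ Q *ᵥ a := hQ.posSemidef.dotProduct_mulVec_nonneg a
    simp only [star_trivial] at *
    linarith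

lemma negdef_re_dot_mapC {N : Matrix n n ℝ} (hN : (-N).PosDef) {z : n → ℂ} (hz : z ≠ 0) :
    (star z ⬝ᵥ (N.map Complex.ofReal) *ᵥ z).re < 0 := by
  have := posdef_re_dot_mapC hN hz
  have hmap : (-N).map Complex.ofReal = -(N.map Complex.ofReal) := by ext i j; simp
  rw [hmap] at this
  simp only [neg_mulVec, dotProduct_neg, Complex.neg_re] at this
  linarith

/-- quadratic form of the structured block matrix -/
lemma quad_expand {n1 n2 n3 : Type*} [Fintype n1] [Fintype n2] [Fintype n3]
    (M11 : Matrix n1 n1 ℂ) (M12 : Matrix n1 n2 ℂ) (M13 : Matrix n1 n3 ℂ)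
    (M21 : Matrix n2 n1 ℂ) (M31 : Matrix n3 n1 ℂ)
    (M22 : Matrix n2 n2 ℂ) (M33 : Matrix n3 n3 ℂ)
    (x : n1 → ℂ) (d : n2 → ℂ) (e : n3 → ℂ) :
    star (Sum.elim x (Sum.elim d e)) ⬝ᵥ
      (fromBlocks M11 (fromCols M12 M13) (fromRows M21 M31)
        (fromBlocks M22 0 0 M33)) *ᵥ Sum.elim x (Sum.elim d e)
    = star x ⬝ᵥ M11 *ᵥ x + star x ⬝ᵥ M12 *ᵥ d + star x ⬝ᵥ M13 *ᵥ e
      + star d ⬝ᵥ M21 *ᵥ x + star e ⬝ᵥ M31 *ᵥ x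
      + star d ⬝ᵥ M22 *ᵥ d + star e ⬝ᵥ M33 *ᵥ e := by
  simp [fromBlocks_mulVec, fromCols_mulVec_sumElim, fromRows_mulVec,
    Function.star_sumElim, sumElim_dotProduct_sumElim, dotProduct_add]
  ring

lemma rdot_self_nonneg (v : n → ℝ) : 0 ≤ v ⬝ᵥ v :=
  Finset.sum_nonneg fun i _ => mul_self_nonneg _

lemma rdot_self_pos {v : n → ℝ} (hv : v ≠ 0) : 0 < v ⬝ᵥ v := by
  obtain ⟨i, hi⟩ : ∃ i, v i ≠ 0 := by
    by_contra h; push_neg at h; exact hv (funext h)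
  exact Finset.sum_pos' (fun j _ => mul_self_nonneg _)
    ⟨i, Finset.mem_univ i, mul_self_pos.mpr hi⟩

end Helpers


/-- A real square matrix is Hurwitz if every eigenvalue, viewed as a complex matrix,
has strictly negative real part. -/
def IsHurwitz {n : Type*} [Fintype n] [DecidableEq n] (A : Matrix n n ℝ) : Prop :=
  ∀ μ ∈ spectrum ℂ (A.map Complex.ofReal), μ.re < 0

/-- `P = [[Y·A, Y·B_u],[V, −diag(ω_c)]]`. -/
def Pmat {nx nu : ℕ} (Y A : Matrix (Fin nx) (Fin nx) ℝ) (Bu : Matrix (Fin nx) (Fin nu) ℝ)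
    (V : Matrix (Fin nu) (Fin nx) ℝ) (ω : Fin nu → ℝ) :
    Matrix (Fin nx ⊕ Fin nu) (Fin nx ⊕ Fin nu) ℝ :=
  fromBlocks (Y * A) (Y * Bu) V (-(diagonal ω))

/-- Closed-loop `A_cl = [[A, B_u],[diag(ω_c)·K, −diag(ω_c)]]` with `K = diag(ω_c)⁻¹·V`. -/
def Acl {nx nu : ℕ} (A : Matrix (Fin nx) (Fin nx) ℝ) (Bu : Matrix (Fin nx) (Fin nu) ℝ)
    (V : Matrix (Fin nu) (Fin nx) ℝ) (ω : Fin nu → ℝ) :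
    Matrix (Fin nx ⊕ Fin nu) (Fin nx ⊕ Fin nu) ℝ :=
  fromBlocks A Bu (diagonal ω * ((diagonal ω)⁻¹ * V)) (-(diagonal ω))

/-- Closed-loop `B_cl = [[B_d·W_d, B_u·diag(κ)^{−1/2}],[0, 0]]`. -/
def Bcl {nx nu nd : ℕ} (Bd : Matrix (Fin nx) (Fin nd) ℝ) (Wd : Matrix (Fin nd) (Fin nd) ℝ)
    (Bu : Matrix (Fin nx) (Fin nu) ℝ) (κ : Fin nu → ℝ) :
    Matrix (Fin nx ⊕ Fin nu) (Fin nd ⊕ Fin nu) ℝ :=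
  fromBlocks (Bd * Wd) (Bu * diagonal fun i => (Real.sqrt (κ i))⁻¹) 0 0

/-- Closed-loop `C_cl = [C_z, 0]`. -/
def Ccl {nx nu nz : ℕ} (Cz : Matrix (Fin nz) (Fin nx) ℝ) :
    Matrix (Fin nz) (Fin nx ⊕ Fin nu) ℝ :=
  fromCols Cz 0

/-- Theorem 1 of the paper (H∞ content): feasibility of the LMI yields a Hurwitz closed loop
whose transfer function has spectral norm at most `γ` at every frequency. -/
theorem hinf_lmi_closed_loop_bound {nx nu nd nz : ℕ}
    (hnx : 0 < nx) (hnu : 0 < nu) (hnd : 0 < nd) (hnz : 0 < nz)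
    (A : Matrix (Fin nx) (Fin nx) ℝ) (Bu : Matrix (Fin nx) (Fin nu) ℝ)
    (Bd : Matrix (Fin nx) (Fin nd) ℝ) (Cz : Matrix (Fin nz) (Fin nx) ℝ)
    (Wd : Matrix (Fin nd) (Fin nd) ℝ) (hWd : Wd.IsDiag) (hWdUnit : IsUnit Wd.det)
    (γ : ℝ) (hγ : 0 < γ)
    (Y : Matrix (Fin nx) (Fin nx) ℝ) (hY : Y.PosDef)
    (V : Matrix (Fin nu) (Fin nx) ℝ)
    (ω κ : Fin nu → ℝ) (hω : ∀ i, 0 < ω i) (hκ : ∀ i, 0 < κ i)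
    (hLMI : (-(fromBlocks
        (Pmat Y A Bu V ω + (Pmat Y A Bu V ω)ᵀ)
        (fromCols (fromBlocks (Y * Bd) (Y * Bu) 0 0) (fromRows Czᵀ 0))
        (fromCols (fromBlocks (Y * Bd) (Y * Bu) 0 0) (fromRows Czᵀ 0))ᵀ
        (fromBlocks (-(γ • fromBlocks (Wd⁻¹ * Wd⁻¹) 0 0 (diagonal κ))) 0 0
          (-(γ • (1 : Matrix (Fin nz) (Fin nz) ℝ)))))).PosDef) :
    IsHurwitz (Acl A Bu V ω) ∧
      ∀ w : ℝ,
        IsUnit (((w : ℂ) * Complex.I) • (1 : Matrix (Fin nx ⊕ Fin nu) (Fin nx ⊕ Fin nu) ℂ)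
            - (Acl A Bu V ω).map Complex.ofReal) ∧
        ‖(Ccl (nu := nu) Cz).map Complex.ofReal *
            (((w : ℂ) * Complex.I) • (1 : Matrix (Fin nx ⊕ Fin nu) (Fin nx ⊕ Fin nu) ℂ)
              - (Acl A Bu V ω).map Complex.ofReal)⁻¹ *
            (Bcl Bd Wd Bu κ).map Complex.ofReal‖ ≤ γ := by

  classical
  -- abbreviations
  set Dω : Matrix (Fin nu) (Fin nu) ℝ := diagonal ω with hDω
  have hDωdet : IsUnit Dω.det := by
    rw [det_diagonal]
    exact isUnit_iff_ne_zero.mpr (ne_of_gt (Finset.prod_pos fun i _ => hω i))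
  have hAcl : Acl A Bu V ω = fromBlocks A Bu V (-(diagonal ω)) := by
    unfold Acl
    rw [Matrix.mul_nonsing_inv_cancel_left _ _ hDωdet]
  set 𝔸 : Matrix (Fin nx ⊕ Fin nu) (Fin nx ⊕ Fin nu) ℝ :=
    fromBlocks A Bu V (-(diagonal ω)) with h𝔸
  set Q : Matrix (Fin nx ⊕ Fin nu) (Fin nx ⊕ Fin nu) ℝ :=
    fromBlocks Y 0 0 (1 : Matrix (Fin nu) (Fin nu) ℝ) with hQ
  set Bt : Matrix (Fin nx ⊕ Fin nu) (Fin nd ⊕ Fin nu) ℝ :=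
    fromBlocks Bd Bu 0 0 with hBt
  set S : Matrix (Fin nd ⊕ Fin nu) (Fin nd ⊕ Fin nu) ℝ :=
    fromBlocks (Wd⁻¹ * Wd⁻¹) 0 0 (diagonal κ) with hS
  set T : Matrix (Fin nd ⊕ Fin nu) (Fin nd ⊕ Fin nu) ℝ :=
    fromBlocks Wd 0 0 (diagonal fun i => (Real.sqrt (κ i))⁻¹) with hT
  set R : Matrix (Fin nx ⊕ Fin nu) (Fin nd ⊕ Fin nu) ℝ :=
    fromBlocks (Y * Bd) (Y * Bu) 0 0 with hR
  have hYsym : Yᵀ = Y := hY.1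
  have hWdT : Wdᵀ = Wd := by
    ext i j
    rcases eq_or_ne i j with rfl | hne
    · rfl
    · rw [transpose_apply, hWd hne.symm, hWd hne]
  have hQT : Qᵀ = Q := by
    rw [hQ, fromBlocks_transpose, hYsym, transpose_zero, transpose_zero, transpose_one]
  have hQA : Q * 𝔸 = Pmat Y A Bu V ω := by
    rw [hQ, h𝔸, Pmat, fromBlocks_multiply]
    simp
  have hPT : (Pmat Y A Bu V ω)ᵀ = 𝔸ᵀ * Q := by
    rw [← hQA, transpose_mul, hQT]
  have hRQB : R = Q * Bt := by
    rw [hQ, hBt, hR, fromBlocks_multiply]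
    simp
  have hBclT : Bcl Bd Wd Bu κ = Bt * T := by
    rw [hBt, hT, Bcl, fromBlocks_multiply]
    simp
  have hTST : Tᵀ * (S * T) = 1 := by
    have hWinv : Wd⁻¹ * Wd⁻¹ * Wd = Wd⁻¹ := by
      rw [Matrix.mul_assoc, Matrix.nonsing_inv_mul _ hWdUnit, Matrix.mul_one]
    have hκd : (diagonal fun i => (Real.sqrt (κ i))⁻¹) *
        ((diagonal κ) * diagonal fun i => (Real.sqrt (κ i))⁻¹) = 1 := by
      rw [diagonal_mul_diagonal, diagonal_mul_diagonal, ← diagonal_one]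
      refine congrArg diagonal (funext fun i => ?_)
      have h0 : Real.sqrt (κ i) ≠ 0 := ne_of_gt (Real.sqrt_pos.mpr (hκ i))
      have hs : Real.sqrt (κ i) * Real.sqrt (κ i) = κ i := Real.mul_self_sqrt (hκ i).le
      rw [← hs]
      field_simp
      rw [Real.sqrt_sq (Real.sqrt_nonneg _)]
    rw [hT, hS, fromBlocks_transpose, hWdT, diagonal_transpose, transpose_zero, transpose_zero,
      fromBlocks_multiply, fromBlocks_multiply]
    simp only [Matrix.mul_zero, Matrix.zero_mul, add_zero, zero_add, hWinv, hκd,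
      Matrix.mul_nonsing_inv _ hWdUnit]
    exact fromBlocks_one
  have hQpos : Q.PosDef := by
    refine Matrix.PosDef.of_dotProduct_mulVec_pos ?_ ?_
    · ext i j
      simp only [conjTranspose_apply, star_trivial]
      exact congrFun (congrFun hQT i) j
    · intro v hv
      rw [star_trivial, ← Sum.elim_comp_inl_inr v, hQ, fromBlocks_mulVec,
        sumElim_dotProduct_sumElim]
      simp only [Matrix.zero_mulVec, Matrix.one_mulVec, add_zero, zero_add,
        Sum.elim_comp_inl, Sum.elim_comp_inr]
      rcases eq_or_ne (v ∘ Sum.inl) 0 with h1 | h1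
      · have h2 : v ∘ Sum.inr ≠ 0 := by
          intro h2
          apply hv
          funext i
          cases i with
          | inl i => exact congrFun h1 i
          | inr i => exact congrFun h2 i
        have := hY.posSemidef.dotProduct_mulVec_nonneg (v ∘ Sum.inl)
        rw [star_trivial] at this
        have := rdot_self_pos h2
        linarith
      · have := hY.dotProduct_mulVec_pos h1
        rw [star_trivial] at this
        have := rdot_self_nonneg (v ∘ Sum.inr)
        linarith
  -- the real LMI matrix, restructured
  set Cr : Matrix (Fin nz) (Fin nx ⊕ Fin nu) ℝ := Ccl (nu := nu) Cz with hCr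
  set N : Matrix ((Fin nx ⊕ Fin nu) ⊕ ((Fin nd ⊕ Fin nu) ⊕ Fin nz))
      ((Fin nx ⊕ Fin nu) ⊕ ((Fin nd ⊕ Fin nu) ⊕ Fin nz)) ℝ :=
    fromBlocks (Q * 𝔸 + 𝔸ᵀ * Q) (fromCols R Crᵀ) (fromRows Rᵀ Cr)
      (fromBlocks (-(γ • S)) 0 0 (-(γ • (1 : Matrix (Fin nz) (Fin nz) ℝ)))) with hN
  have hNLMI : (-N).PosDef := by
    have hCt : fromRows Czᵀ (0 : Matrix (Fin nu) (Fin nz) ℝ) = Crᵀ := by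
      rw [hCr, Ccl, transpose_fromCols, transpose_zero]
    have h21 : (fromCols R Crᵀ)ᵀ = fromRows Rᵀ Cr := by
      rw [transpose_fromCols, transpose_transpose]
    rw [hN, ← h21, ← hCt, hQA, ← hPT]
    exact hLMI
  -- complexifications
  set Qc : Matrix (Fin nx ⊕ Fin nu) (Fin nx ⊕ Fin nu) ℂ := Q.map Complex.ofReal with hQc
  set Ac : Matrix (Fin nx ⊕ Fin nu) (Fin nx ⊕ Fin nu) ℂ := 𝔸.map Complex.ofReal with hAc
  set Rc : Matrix (Fin nx ⊕ Fin nu) (Fin nd ⊕ Fin nu) ℂ := R.map Complex.ofReal with hRc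
  set Sc : Matrix (Fin nd ⊕ Fin nu) (Fin nd ⊕ Fin nu) ℂ := S.map Complex.ofReal with hSc
  set Tc : Matrix (Fin nd ⊕ Fin nu) (Fin nd ⊕ Fin nu) ℂ := T.map Complex.ofReal with hTc
  set Ccx : Matrix (Fin nz) (Fin nx ⊕ Fin nu) ℂ := Cr.map Complex.ofReal with hCcx
  set Bcc : Matrix (Fin nx ⊕ Fin nu) (Fin nd ⊕ Fin nu) ℂ :=
    (Bcl Bd Wd Bu κ).map Complex.ofReal with hBcc
  have master : ∀ (x : Fin nx ⊕ Fin nu → ℂ) (d : Fin nd ⊕ Fin nu → ℂ) (e : Fin nz → ℂ),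
      Sum.elim x (Sum.elim d e) ≠ 0 →
      (star x ⬝ᵥ Qc *ᵥ (Ac *ᵥ x) + star (Ac *ᵥ x) ⬝ᵥ (Qc *ᵥ x)
        + star x ⬝ᵥ Rc *ᵥ d + star (Rc *ᵥ d) ⬝ᵥ x
        + star (Ccx *ᵥ x) ⬝ᵥ e + star e ⬝ᵥ (Ccx *ᵥ x)
        - (γ:ℂ) * (star d ⬝ᵥ Sc *ᵥ d) - (γ:ℂ) * (star e ⬝ᵥ e)).re < 0 := by
    intro x d e hz
    have hNmapC : N.map Complex.ofReal
        = fromBlocks (Qc * Ac + (𝔸ᵀ).map Complex.ofReal * Qc)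
            (fromCols Rc ((Crᵀ).map Complex.ofReal))
            (fromRows ((Rᵀ).map Complex.ofReal) Ccx)
            (fromBlocks (-((γ:ℂ) • Sc)) 0 0
              (-((γ:ℂ) • (1 : Matrix (Fin nz) (Fin nz) ℂ)))) := by
      rw [hN, fromBlocks_map, fromBlocks_map, fromColumns_mapC, fromRows_mapC,
        mapC_add (Q * 𝔸) (𝔸ᵀ * Q), mapC_mul Q 𝔸, mapC_mul 𝔸ᵀ Q,
        mapC_neg_smul γ S, mapC_neg_smul γ 1, mapC_one,
        Matrix.map_zero _ Complex.ofReal_zero, Matrix.map_zero _ Complex.ofReal_zero]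
    have h := negdef_re_dot_mapC hNLMI hz
    rw [hNmapC, quad_expand,
      add_mulVec, dotProduct_add,
      ← mulVec_mulVec x Qc Ac,
      ← mulVec_mulVec x ((𝔸ᵀ).map Complex.ofReal) Qc,
      dot_shift 𝔸 x, dot_shift R d, dot_shift Cr x,
      neg_mulVec, dotProduct_neg, smul_mulVec, dotProduct_smul,
      neg_mulVec, dotProduct_neg, smul_mulVec, dotProduct_smul, one_mulVec] at h
    rw [← hAc, ← hRc, ← hCcx] at h
    have heq : star x ⬝ᵥ Qc *ᵥ (Ac *ᵥ x) + star (Ac *ᵥ x) ⬝ᵥ (Qc *ᵥ x)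
        + star x ⬝ᵥ Rc *ᵥ d + star (Rc *ᵥ d) ⬝ᵥ x
        + star (Ccx *ᵥ x) ⬝ᵥ e + star e ⬝ᵥ (Ccx *ᵥ x)
        - (γ:ℂ) * (star d ⬝ᵥ Sc *ᵥ d) - (γ:ℂ) * (star e ⬝ᵥ e)
        = star x ⬝ᵥ Qc *ᵥ (Ac *ᵥ x) + star (Ac *ᵥ x) ⬝ᵥ (Qc *ᵥ x) + star x ⬝ᵥ Rc *ᵥ d
          + star (Ccx *ᵥ x) ⬝ᵥ e + star (Rc *ᵥ d) ⬝ᵥ x + star e ⬝ᵥ (Ccx *ᵥ x)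
          + -((γ:ℂ) • (star d ⬝ᵥ Sc *ᵥ d)) + -((γ:ℂ) • (star e ⬝ᵥ e)) := by
      simp only [smul_eq_mul]
      ring
    rw [heq]
    exact h
  have key1 : ∀ v : Fin nx ⊕ Fin nu → ℂ, v ≠ 0 →
      (star v ⬝ᵥ Qc *ᵥ (Ac *ᵥ v) + star (Ac *ᵥ v) ⬝ᵥ (Qc *ᵥ v)).re < 0 := by
    intro v hv
    have hz : Sum.elim v (Sum.elim (0 : Fin nd ⊕ Fin nu → ℂ) (0 : Fin nz → ℂ)) ≠ 0 := by
      intro h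
      exact hv (funext fun i => congrFun h (Sum.inl i))
    have h := master v 0 0 hz
    simpa using h
  have hHur : IsHurwitz (Acl A Bu V ω) := by
    intro μ hμ
    rw [hAcl, ← hAc, spectrum.mem_iff] at hμ
    by_contra hre
    push_neg at hre
    apply hμ
    rw [Matrix.isUnit_iff_isUnit_det, isUnit_iff_ne_zero]
    intro hdet
    obtain ⟨v, hv0, hv⟩ := (Matrix.exists_mulVec_eq_zero_iff).mpr hdet
    have hAv : Ac *ᵥ v = μ • v := by
      rw [sub_mulVec, Algebra.algebraMap_eq_smul_one, smul_mulVec, one_mulVec,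
        sub_eq_zero] at hv
      exact hv.symm
    have hlt := key1 v hv0
    have hexp : star v ⬝ᵥ Qc *ᵥ (μ • v) + star (μ • v) ⬝ᵥ (Qc *ᵥ v)
        = ((2 * μ.re : ℝ) : ℂ) * (star v ⬝ᵥ Qc *ᵥ v) := by
      rw [mulVec_smul, dotProduct_smul, star_smul, smul_dotProduct, ← Complex.add_conj]
      simp only [smul_eq_mul, RCLike.star_def]
      ring
    rw [hAv, hexp, Complex.re_ofReal_mul] at hlt
    have hq : 0 < (star v ⬝ᵥ Qc *ᵥ v).re := posdef_re_dot_mapC hQpos hv0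
    nlinarith
  refine ⟨hHur, fun w => ?_⟩
  have hw_unit : IsUnit (((w:ℂ) * Complex.I) • (1 : Matrix (Fin nx ⊕ Fin nu) (Fin nx ⊕ Fin nu) ℂ)
      - (Acl A Bu V ω).map Complex.ofReal) := by
    by_contra hu
    have hmem : ((w:ℂ) * Complex.I) ∈ spectrum ℂ ((Acl A Bu V ω).map Complex.ofReal) := by
      rw [spectrum.mem_iff, Algebra.algebraMap_eq_smul_one]
      exact hu
    have := hHur _ hmem
    simp at this
  refine ⟨hw_unit, ?_⟩
  rw [hAcl, ← hAc] at hw_unit ⊢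
  set G : Matrix (Fin nx ⊕ Fin nu) (Fin nx ⊕ Fin nu) ℂ :=
    ((w:ℂ) * Complex.I) • 1 - Ac with hG
  have hGdet : IsUnit G.det := (Matrix.isUnit_iff_isUnit_det G).mp hw_unit
  set M : Matrix (Fin nz) (Fin nd ⊕ Fin nu) ℂ := Ccx * G⁻¹ * Bcc with hM
  rw [l2_opNorm_def]
  refine ContinuousLinearMap.opNorm_le_bound _ hγ.le fun u => ?_
  set u' : (Fin nd ⊕ Fin nu) → ℂ := WithLp.equiv 2 _ u with hu'
  have happ : ((Matrix.toEuclideanLin.trans LinearMap.toContinuousLinearMap) M) u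
      = (WithLp.equiv 2 (Fin nz → ℂ)).symm (M *ᵥ u') := rfl
  rw [happ, EuclideanSpace.norm_eq, EuclideanSpace.norm_eq]
  simp only [WithLp.equiv_symm_apply, PiLp.toLp_apply]
  have hmain : ∑ i, ‖(M *ᵥ u') i‖^2 ≤ γ^2 * ∑ i, ‖u' i‖^2 := by
    rcases eq_or_ne u' 0 with hne | hne
    · rw [hne, mulVec_zero]
      simp
    · set x : (Fin nx ⊕ Fin nu) → ℂ := G⁻¹ *ᵥ (Bcc *ᵥ u') with hx
      have hMu : M *ᵥ u' = Ccx *ᵥ x := by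
        rw [hM, hx, mulVec_mulVec, mulVec_mulVec, Matrix.mul_assoc]
      set d : (Fin nd ⊕ Fin nu) → ℂ := Tc *ᵥ u' with hd
      set e : Fin nz → ℂ := ((γ:ℂ))⁻¹ • (Ccx *ᵥ x) with he
      have hSd : star d ⬝ᵥ Sc *ᵥ d = star u' ⬝ᵥ u' := by
        rw [hd, hTc, hSc, ← dot_shift T u', mulVec_mulVec, mulVec_mulVec, ← mapC_mul,
          ← mapC_mul, Matrix.mul_assoc, hTST, mapC_one, one_mulVec]
      have hd0 : d ≠ 0 := by
        intro h0
        have h1 : (star u' ⬝ᵥ u').re = 0 := by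
          rw [← hSd, h0]
          simp
        exact ne_of_gt (star_dot_self_re_pos hne) h1
      have hz : Sum.elim x (Sum.elim d e) ≠ 0 :=
        fun h0 => hd0 (funext fun i => congrFun h0 (Sum.inr (Sum.inl i)))
      have hGx : G *ᵥ x = Bcc *ᵥ u' := by
        rw [hx, mulVec_mulVec, Matrix.mul_nonsing_inv _ hGdet, one_mulVec]
      have hAx : Ac *ᵥ x = ((w:ℂ) * Complex.I) • x - Bcc *ᵥ u' := by
        rw [← hGx, hG, sub_mulVec, smul_mulVec, one_mulVec, sub_sub_cancel]
      have hRd : Rc *ᵥ d = Qc *ᵥ (Bcc *ᵥ u') := by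
        have hRT : R * T = Q * Bcl Bd Wd Bu κ := by
          rw [hRQB, Matrix.mul_assoc, ← hBclT]
        rw [hd, mulVec_mulVec, hRc, hTc, ← mapC_mul, hRT, mapC_mul, ← hBcc, ← hQc,
          ← mulVec_mulVec]
      have hQbx : star (Qc *ᵥ (Bcc *ᵥ u')) ⬝ᵥ x = star (Bcc *ᵥ u') ⬝ᵥ (Qc *ᵥ x) := by
        have h1 := dot_shift Q (Bcc *ᵥ u') x
        rw [hQT, ← hQc] at h1
        exact h1.symm
      have hconj : (starRingEnd ℂ) ((w:ℂ) * Complex.I) = -((w:ℂ) * Complex.I) := by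
        simp [Complex.conj_ofReal]
      have hkey := master x d e hz
      have hval : star x ⬝ᵥ Qc *ᵥ (Ac *ᵥ x) + star (Ac *ᵥ x) ⬝ᵥ (Qc *ᵥ x)
            + star x ⬝ᵥ Rc *ᵥ d + star (Rc *ᵥ d) ⬝ᵥ x
            + star (Ccx *ᵥ x) ⬝ᵥ e + star e ⬝ᵥ (Ccx *ᵥ x)
            - (γ:ℂ) * (star d ⬝ᵥ Sc *ᵥ d) - (γ:ℂ) * (star e ⬝ᵥ e)
          = ((γ:ℂ))⁻¹ * (star (Ccx *ᵥ x) ⬝ᵥ (Ccx *ᵥ x)) - (γ:ℂ) * (star u' ⬝ᵥ u') := by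
        have hγ0 : (γ:ℂ) ≠ 0 := Complex.ofReal_ne_zero.mpr (ne_of_gt hγ)
        rw [hAx, hRd, hSd, he]
        rw [mulVec_sub, mulVec_smul, dotProduct_sub, dotProduct_smul,
          star_sub, star_smul, sub_dotProduct, smul_dotProduct, hQbx,
          dotProduct_smul, star_smul, smul_dotProduct, dotProduct_smul]
        simp only [smul_eq_mul, RCLike.star_def, hconj, map_inv₀, Complex.conj_ofReal]
        field_simp
        simp only [smul_dotProduct, smul_eq_mul]
        field_simp
        ring
      rw [hval] at hkey
      rw [Complex.sub_re, ← Complex.ofReal_inv, Complex.re_ofReal_mul, Complex.re_ofReal_mul,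
        re_star_dot_self, re_star_dot_self, ← hMu] at hkey
      have hsum1 : (0:ℝ) ≤ ∑ i, ‖(M *ᵥ u') i‖^2 := by positivity
      have hγinv : γ⁻¹ * (∑ i, ‖(M *ᵥ u') i‖^2) < γ * ∑ i, ‖u' i‖^2 := by linarith
      have := mul_lt_mul_of_pos_left hγinv hγ
      rw [← mul_assoc, mul_inv_cancel₀ (ne_of_gt hγ), one_mul] at this
      nlinarith
  have hnm : ∀ i, ‖u i‖ = ‖u' i‖ := fun i => rfl
  have hsum2 : ∑ i, ‖u i‖^2 = ∑ i, ‖u' i‖^2 := by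
    simp only [hnm]
  rw [hsum2]
  calc Real.sqrt (∑ i, ‖(M *ᵥ u') i‖^2) ≤ Real.sqrt (γ^2 * ∑ i, ‖u' i‖^2) :=
        Real.sqrt_le_sqrt hmain
    _ = γ * Real.sqrt (∑ i, ‖u' i‖^2) := by
        rw [Real.sqrt_mul (sq_nonneg γ), Real.sqrt_sq hγ.le]
end
end

section
/- Let n_x, n_u, n_d, n_z be positive natural numbers, A ∈ ℝ^{n_x×n_x}, B_u ∈ ℝ^{n_x×n_u}, B_d ∈ ℝ^{n_x×n_d}, C_z ∈ ℝ^{n_z×n_x}, let W_d ∈ ℝ^{n_d×n_d} be an invertible diagonal matrix, and let γ > 0. Suppose there exist a symmetric positive definite Y ∈ ℝ^{n_x×n_x}, a matrix V ∈ ℝ^{n_u×n_x}, vectors ω_c, κ ∈ ℝ^{n_u} with strictly positive entries, and a symmetric positive semidefinite Q₁ ∈ ℝ^{n_z×n_z} such that, with P := [[Y·A, Y·B_u],[V, −diag(ω_c)]]: (i) the symmetric block matrix [[P + Pᵀ, [[Y·B_d, Y·B_u],[0, 0]]], [∗, −blockdiag(W_d⁻², diag(κ))]] is negative definite; (ii)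 the symmetric block matrix [[Q₁, C_z, 0],[C_zᵀ, Y, 0],[0, 0, I]] is positive semidefinite; and (iii) trace(Q₁) ≤ γ. Define K := diag(ω_c)⁻¹·V, A_cl := [[A, B_u],[diag(ω_c)·K, −diag(ω_c)]], B_cl := [[B_d·W_d, B_u·diag(κ)^{−1/2}],[0, 0]], C_cl := [C_z, 0]. Then A_cl is Hurwitz and ∫₀^∞ ‖C_cl·exp(t·A_cl)·B_cl‖_F² dt ≤ γ, where ‖·‖_F denotes the Frobenius norm and exp is the matrix exponential. -/
open Matrix
open scoped Matrix.Norms.L2Operator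

noncomputable section

/-- The squared Frobenius norm: the sum of the squares of the entries. -/
def frobeniusNormSq {m n : Type*} [Fintype m] [Fintype n] (M : Matrix m n ℝ) : ℝ :=
  ∑ i, ∑ j, (M i j) ^ 2

section Aux

set_option linter.unusedSectionVars false

namespace H2Aux

variable {m n p : Type*} [Fintype m] [Fintype n] [Fintype p]

/-- positivity of the (not necessarily symmetric) quadratic form -/
def qpos (M : Matrix n n ℝ) : Prop := ∀ x : n → ℝ, x ≠ 0 → 0 < x ⬝ᵥ M *ᵥ x

def qnonneg (M : Matrix n n ℝ) : Prop := ∀ x : n → ℝ, 0 ≤ x ⬝ᵥ M *ᵥ x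

lemma qpos.qnonneg {M : Matrix n n ℝ} (h : qpos M) : qnonneg M := fun x => by
  by_cases hx : x = 0
  · simp [hx]
  · exact (h x hx).le

lemma _root_.Matrix.PosDef.qpos {M : Matrix n n ℝ} (h : M.PosDef) : qpos M := fun x hx => by
  simpa using h.dotProduct_mulVec_pos hx

lemma sum_elim_ne_zero_left {x : m → ℝ} (y : n → ℝ) (hx : x ≠ 0) : Sum.elim x y ≠ 0 :=
  fun hcon => hx (funext fun i => congrFun hcon (Sum.inl i))

lemma qpos_fromBlocks {A : Matrix m m ℝ} {D : Matrix n n ℝ} (hA : qpos A) (hD : qpos D) :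
    qpos (fromBlocks A 0 0 D) := by
  intro x hx
  rw [← Sum.elim_comp_inl_inr x, fromBlocks_mulVec, sumElim_dotProduct_sumElim]
  simp only [Sum.elim_comp_inl, Sum.elim_comp_inr, zero_mulVec, add_zero, zero_add]
  by_cases h1 : x ∘ Sum.inl = 0
  · have h2 : x ∘ Sum.inr ≠ 0 := by
      intro h2
      apply hx
      funext i
      cases i with
      | inl i => exact congrFun h1 i
      | inr i => exact congrFun h2 i
    have := hD _ h2
    have := hA.qnonneg (x ∘ Sum.inl)
    linarith
  · have := hA _ h1
    have := hD.qnonneg (x ∘ Sum.inr)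
    linarith

lemma schur_qpos [DecidableEq n] {H : Matrix m m ℝ} {F : Matrix m n ℝ} {D G : Matrix n n ℝ}
    (hDG : D * G = 1)
    (h : qpos (-(fromBlocks H F Fᵀ (-D)))) :
    qpos (-(H + F * G * Fᵀ)) := by
  intro x hx
  set y : n → ℝ := G *ᵥ (Fᵀ *ᵥ x) with hy
  have hv : Sum.elim x y ≠ 0 := sum_elim_ne_zero_left y hx
  have hval := h _ hv
  have hDy : D *ᵥ y = Fᵀ *ᵥ x := by
    rw [hy, mulVec_mulVec, hDG, one_mulVec]
  rw [neg_mulVec, dotProduct_neg, fromBlocks_mulVec, sumElim_dotProduct_sumElim] at hval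
  simp only [Sum.elim_comp_inl, Sum.elim_comp_inr, neg_mulVec, dotProduct_add,
    dotProduct_neg] at hval
  rw [hDy] at hval
  have hxFy : x ⬝ᵥ F *ᵥ y = x ⬝ᵥ (F * G * Fᵀ) *ᵥ x := by
    rw [hy, mulVec_mulVec, mulVec_mulVec]
  rw [hxFy] at hval
  rw [neg_mulVec, dotProduct_neg, add_mulVec, dotProduct_add, ← hxFy]
  linarith

lemma schur_qle [DecidableEq n] {Q : Matrix m m ℝ} {C : Matrix m n ℝ} {D G : Matrix n n ℝ}
    (hDG : D * G = 1)
    (h : (fromBlocks Q C Cᵀ D).PosSemidef) :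
    ∀ x : m → ℝ, x ⬝ᵥ (C * G * Cᵀ) *ᵥ x ≤ x ⬝ᵥ Q *ᵥ x := by
  intro x
  set y : n → ℝ := -(G *ᵥ (Cᵀ *ᵥ x)) with hy
  have hval := h.dotProduct_mulVec_nonneg (Sum.elim x y)
  have hDy : D *ᵥ y = -(Cᵀ *ᵥ x) := by
    rw [hy, mulVec_neg, mulVec_mulVec, hDG, one_mulVec]
  rw [star_trivial, fromBlocks_mulVec, sumElim_dotProduct_sumElim] at hval
  simp only [Sum.elim_comp_inl, Sum.elim_comp_inr, dotProduct_add] at hval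
  rw [hDy] at hval
  have hxCy : x ⬝ᵥ C *ᵥ y = -(x ⬝ᵥ (C * G * Cᵀ) *ᵥ x) := by
    rw [hy, mulVec_neg, dotProduct_neg, mulVec_mulVec, mulVec_mulVec]
  rw [hxCy] at hval
  simp only [dotProduct_neg, neg_neg] at hval
  linarith

lemma diag_quad [DecidableEq n] (M : Matrix n n ℝ) (i : n) :
    M i i = Pi.single i 1 ⬝ᵥ M *ᵥ Pi.single i 1 := by
  simp [dotProduct, mulVec, Pi.single_apply]

lemma trace_le_trace_of_quad [DecidableEq n] {P Q : Matrix n n ℝ}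
    (h : ∀ x : n → ℝ, x ⬝ᵥ P *ᵥ x ≤ x ⬝ᵥ Q *ᵥ x) : P.trace ≤ Q.trace := by
  apply Finset.sum_le_sum
  intro i _
  rw [Matrix.diag, diag_quad P i]
  rw [show Q.diag i = Q i i from rfl, diag_quad Q i]
  exact h _

lemma quad_sandwich (M : Matrix p n ℝ) (S : Matrix n n ℝ) (i : p) :
    (M * S * Mᵀ) i i = (fun j => M i j) ⬝ᵥ S *ᵥ (fun j => M i j) := by
  simp only [mul_apply, transpose_apply, dotProduct, mulVec, Finset.sum_mul, Finset.mul_sum]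
  rw [Finset.sum_comm]
  exact Finset.sum_congr rfl fun j _ => Finset.sum_congr rfl fun k _ => by ring

lemma trace_sandwich_nonneg (M : Matrix p n ℝ) {S : Matrix n n ℝ} (hS : qnonneg S) :
    0 ≤ (M * S * Mᵀ).trace := by
  apply Finset.sum_nonneg
  intro i _
  rw [Matrix.diag, quad_sandwich]
  exact hS _

lemma quad_congr_mul (M X : Matrix n n ℝ) (hXt : Xᵀ = X) (x : n → ℝ) :
    x ⬝ᵥ (X * M * X) *ᵥ x = (X *ᵥ x) ⬝ᵥ M *ᵥ (X *ᵥ x) := by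
  rw [← mulVec_mulVec, ← mulVec_mulVec, dotProduct_mulVec x]
  have key : x ᵥ* X = X *ᵥ x := by
    rw [← Matrix.mulVec_transpose, hXt]
  rw [key]

lemma qnonneg_mul_transpose (N : Matrix n p ℝ) : qnonneg (N * Nᵀ) := by
  intro x
  have h : x ⬝ᵥ (N * Nᵀ) *ᵥ x = (Nᵀ *ᵥ x) ⬝ᵥ (Nᵀ *ᵥ x) := by
    rw [← mulVec_mulVec, dotProduct_mulVec x, ← Matrix.mulVec_transpose]
  rw [h]
  exact Finset.sum_nonneg fun i _ => mul_self_nonneg _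

lemma frobeniusNormSq_eq_trace (M : Matrix m n ℝ) :
    frobeniusNormSq M = (M * Mᵀ).trace := by
  simp [frobeniusNormSq, Matrix.trace, Matrix.diag, mul_apply, pow_two]

lemma re_quad (M : Matrix n n ℝ) (v : n → ℂ) :
    (star v ⬝ᵥ (M.map Complex.ofReal) *ᵥ v).re
      = (fun i => (v i).re) ⬝ᵥ M *ᵥ (fun i => (v i).re)
        + (fun i => (v i).im) ⬝ᵥ M *ᵥ (fun i => (v i).im) := by
  simp only [dotProduct, mulVec, map_apply, Pi.star_apply, Finset.mul_sum]
  rw [Complex.re_sum, ← Finset.sum_add_distrib]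
  refine Finset.sum_congr rfl fun i _ => ?_
  rw [Complex.re_sum, ← Finset.sum_add_distrib]
  refine Finset.sum_congr rfl fun j _ => ?_
  simp [Complex.mul_re, Complex.mul_im, RCLike.star_def]

lemma re_quad_pos {M : Matrix n n ℝ} (hM : qpos M) {v : n → ℂ} (hv : v ≠ 0) :
    0 < (star v ⬝ᵥ (M.map Complex.ofReal) *ᵥ v).re := by
  rw [re_quad]
  by_cases hre : (fun i => (v i).re) = (0 : n → ℝ)
  · have him : (fun i => (v i).im) ≠ (0 : n → ℝ) := by
      intro him
      apply hv
      funext i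
      exact Complex.ext (congrFun hre i) (congrFun him i)
    have := hM _ him
    have := hM.qnonneg (fun i => (v i).re)
    linarith
  · have := hM _ hre
    have := hM.qnonneg (fun i => (v i).im)
    linarith

lemma isHurwitz_of_lyap [DecidableEq n] {A P : Matrix n n ℝ}
    (hP : qpos P) (hL : qpos (-(P * A + Aᵀ * P))) : IsHurwitz A := by
  intro μ hμ
  rw [spectrum.mem_iff, Matrix.isUnit_iff_isUnit_det, isUnit_iff_ne_zero, not_not] at hμ
  obtain ⟨v, hv0, hv⟩ := (Matrix.exists_mulVec_eq_zero_iff).mpr hμ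
  have hAv : (A.map Complex.ofReal) *ᵥ v = μ • v := by
    have h1 : (algebraMap ℂ (Matrix n n ℂ) μ) = μ • (1 : Matrix n n ℂ) :=
      Algebra.algebraMap_eq_smul_one μ
    rw [sub_mulVec, h1, smul_mulVec, one_mulVec, sub_eq_zero] at hv
    exact hv.symm
  set A' := A.map Complex.ofReal with hA'
  set P' := P.map Complex.ofReal with hP'
  set c : ℂ := star v ⬝ᵥ P' *ᵥ v with hc
  have hmap : ((P * A + Aᵀ * P).map Complex.ofReal) = P' * A' + A'ᵀ * P' := by
    ext i j
    simp only [Matrix.map_apply, Matrix.add_apply, Matrix.mul_apply, Matrix.transpose_apply,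
      hA', hP']
    push_cast
    ring
  have key : star v ⬝ᵥ ((P * A + Aᵀ * P).map Complex.ofReal) *ᵥ v = (μ + starRingEnd ℂ μ) * c := by
    rw [hmap, add_mulVec, dotProduct_add]
    have h1 : star v ⬝ᵥ (P' * A') *ᵥ v = μ * c := by
      rw [← mulVec_mulVec, hAv, mulVec_smul, dotProduct_smul, smul_eq_mul, hc]
    have h2 : star v ⬝ᵥ (A'ᵀ * P') *ᵥ v = starRingEnd ℂ μ * c := by
      rw [← mulVec_mulVec, dotProduct_mulVec, ← Matrix.mulVec_transpose, transpose_transpose]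
      have h3 : A' *ᵥ star v = star (A' *ᵥ v) := by
        funext i
        simp only [mulVec, dotProduct, Pi.star_apply, star_sum, star_mul', map_apply, hA']
        refine Finset.sum_congr rfl fun j _ => ?_
        rw [Complex.star_def, Complex.conj_ofReal, mul_comm]
      rw [h3, hAv, star_smul, smul_dotProduct, hc]
      rfl
    rw [h1, h2]
    ring
  have hneg : (star v ⬝ᵥ ((P * A + Aᵀ * P).map Complex.ofReal) *ᵥ v).re < 0 := by
    have := re_quad_pos hL hv0
    have hmneg : ((-(P * A + Aᵀ * P)).map Complex.ofReal)
        = -((P * A + Aᵀ * P).map Complex.ofReal) := by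
      ext i j; simp
    rw [hmneg, neg_mulVec, dotProduct_neg, Complex.neg_re] at this
    linarith
  have hcre : 0 < c.re := re_quad_pos hP hv0
  have hsum : (μ + starRingEnd ℂ μ) = ((2 * μ.re : ℝ) : ℂ) := Complex.add_conj μ
  rw [key, hsum] at hneg
  rw [Complex.mul_re] at hneg
  simp only [Complex.ofReal_re, Complex.ofReal_im, zero_mul, sub_zero] at hneg
  nlinarith

lemma analytic_main {n d z : Type*} [Fintype n] [DecidableEq n] [Fintype d] [Fintype z]
    (Ac : Matrix n n ℝ) (Bc : Matrix n d ℝ) (Cc : Matrix z n ℝ) (X : Matrix n n ℝ)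
    (hXt : Xᵀ = X) (hXq : qnonneg X)
    (hS : qnonneg (-(Ac * X + X * Acᵀ + Bc * Bcᵀ)))
    (γ : ℝ) (hγ0 : 0 ≤ γ)
    (hX0 : (Cc * X * Ccᵀ).trace ≤ γ) :
    (∫ t in Set.Ioi (0:ℝ),
        frobeniusNormSq (Cc * NormedSpace.exp (t • Ac) * Bc)) ≤ γ := by
  classical
  set E : ℝ → Matrix n n ℝ := fun t => NormedSpace.exp (t • Ac) with hE
  set E₂ : ℝ → Matrix n n ℝ := fun t => NormedSpace.exp (t • Acᵀ) with hE₂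
  have hE2 : ∀ t, (E t)ᵀ = E₂ t := by
    intro t
    rw [hE, hE₂, ← Matrix.exp_transpose, transpose_smul]
  have hEd : ∀ t, HasDerivAt E (Ac * E t) t := fun t => hasDerivAt_exp_smul_const' Ac t
  have hE2d : ∀ t, HasDerivAt E₂ (E₂ t * Acᵀ) t := fun t => hasDerivAt_exp_smul_const Acᵀ t
  have hEc : Continuous E := continuous_iff_continuousAt.2 fun t => (hEd t).continuousAt
  have hE2c : Continuous E₂ := continuous_iff_continuousAt.2 fun t => (hE2d t).continuousAt
  set Tlin : Matrix n n ℝ →ₗ[ℝ] ℝ :=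
    { toFun := fun M => (Cc * M * Ccᵀ).trace
      map_add' := fun M N => by simp [Matrix.mul_add, Matrix.add_mul]
      map_smul' := fun c M => by simp [Matrix.mul_smul, Matrix.smul_mul] } with hTlin
  set T : Matrix n n ℝ →L[ℝ] ℝ := LinearMap.toContinuousLinearMap Tlin with hT
  have hTapp : ∀ M : Matrix n n ℝ, T M = (Cc * M * Ccᵀ).trace := fun M => rfl
  set BB : Matrix n n ℝ := Bc * Bcᵀ with hBB
  set Sm : Matrix n n ℝ := -(Ac * X + X * Acᵀ + BB) with hSm
  set g : ℝ → ℝ := fun t => T (E t * (BB * E₂ t)) with hg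
  set s : ℝ → ℝ := fun t => T (E t * (Sm * E₂ t)) with hs
  set h : ℝ → ℝ := fun t => T (E t * (X * E₂ t)) with hh
  have hgc : Continuous g := T.continuous.comp (hEc.mul (continuous_const.mul hE2c))
  have hsc : Continuous s := T.continuous.comp (hEc.mul (continuous_const.mul hE2c))
  have hcomm : ∀ t, Ac * E t = E t * Ac := fun t =>
    (hasDerivAt_exp_smul_const' Ac t).unique (hasDerivAt_exp_smul_const Ac t)
  have hcomm2 : ∀ t, E₂ t * Acᵀ = Acᵀ * E₂ t := fun t =>
    (hasDerivAt_exp_smul_const Acᵀ t).unique (hasDerivAt_exp_smul_const' Acᵀ t)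
  have hAXS : Ac * X + X * Acᵀ = -BB - Sm := by rw [hSm]; abel
  have hhd : ∀ t, HasDerivAt h (-(g t + s t)) t := by
    intro t
    have hψ : HasDerivAt (fun u => E u * (X * E₂ u))
        (Ac * E t * (X * E₂ t) + E t * (X * (E₂ t * Acᵀ))) t :=
      (hEd t).mul ((hE2d t).const_mul X)
    have hder : HasDerivAt h (T (Ac * E t * (X * E₂ t) + E t * (X * (E₂ t * Acᵀ)))) t :=
      T.hasFDerivAt.comp_hasDerivAt t hψ
    have hval : T (Ac * E t * (X * E₂ t) + E t * (X * (E₂ t * Acᵀ))) = -(g t + s t) := by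
      have e1 : Ac * E t * (X * E₂ t) + E t * (X * (E₂ t * Acᵀ))
          = E t * ((Ac * X + X * Acᵀ) * E₂ t) := by
        rw [hcomm t, hcomm2 t]
        simp only [Matrix.mul_add, Matrix.add_mul, Matrix.mul_assoc]
      rw [e1, hAXS]
      simp only [hg, hs, hTapp]
      simp only [Matrix.sub_mul, Matrix.mul_sub, Matrix.neg_mul, Matrix.mul_neg,
        Matrix.trace_sub, Matrix.trace_neg]
      ring
    rw [hval] at hder
    exact hder
  have hrearr : ∀ (t : ℝ) (S : Matrix n n ℝ),
      Cc * (E t * (S * E₂ t)) * Ccᵀ = (Cc * E t) * S * (Cc * E t)ᵀ := by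
    intro t S
    rw [transpose_mul, hE2 t]
    simp only [Matrix.mul_assoc]
  have hsnn : ∀ t, 0 ≤ s t := by
    intro t
    simp only [hs, hTapp]
    rw [hrearr]
    exact trace_sandwich_nonneg _ hS
  have hhnn : ∀ t, 0 ≤ h t := by
    intro t
    simp only [hh, hTapp]
    rw [hrearr]
    exact trace_sandwich_nonneg _ hXq
  have hh0 : h 0 = (Cc * X * Ccᵀ).trace := by
    simp only [hh, hTapp]
    have hE0 : E 0 = 1 := by rw [hE]; simp [NormedSpace.exp_zero]
    have hE20 : E₂ 0 = 1 := by rw [hE₂]; simp [NormedSpace.exp_zero]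
    rw [hE0, hE20]
    simp
  have hfrob : ∀ t, frobeniusNormSq (Cc * E t * Bc) = g t := by
    intro t
    rw [frobeniusNormSq_eq_trace]
    simp only [hg, hTapp]
    congr 1
    rw [transpose_mul, transpose_mul, hE2 t]
    simp only [hBB, Matrix.mul_assoc]
  have key : ∀ R : ℝ, 0 ≤ R → (∫ t in (0:ℝ)..R, g t) ≤ γ := by
    intro R hR
    have hFTC := intervalIntegral.integral_eq_sub_of_hasDerivAt
      (f := h) (f' := fun t => -(g t + s t)) (a := 0) (b := R)
      (fun t _ => hhd t) (((hgc.add hsc).neg).intervalIntegrable 0 R)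
    rw [intervalIntegral.integral_neg] at hFTC
    have hadd : (∫ t in (0:ℝ)..R, (g t + s t))
        = (∫ t in (0:ℝ)..R, g t) + (∫ t in (0:ℝ)..R, s t) :=
      intervalIntegral.integral_add (hgc.intervalIntegrable 0 R) (hsc.intervalIntegrable 0 R)
    have hsint : 0 ≤ ∫ t in (0:ℝ)..R, s t :=
      intervalIntegral.integral_nonneg hR (fun u _ => hsnn u)
    have := hhnn R
    rw [hadd] at hFTC
    have hh0γ : h 0 ≤ γ := by rw [hh0]; exact hX0
    linarith
  rw [show (∫ t in Set.Ioi (0:ℝ), frobeniusNormSq (Cc * NormedSpace.exp (t • Ac) * Bc))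
      = ∫ t in Set.Ioi (0:ℝ), g t from by
    congr 1
    funext t
    exact hfrob t]
  by_cases hi : MeasureTheory.IntegrableOn g (Set.Ioi (0:ℝ)) MeasureTheory.volume
  · have htend := MeasureTheory.intervalIntegral_tendsto_integral_Ioi 0 hi Filter.tendsto_id
    refine le_of_tendsto htend ?_
    filter_upwards [Filter.eventually_ge_atTop (0:ℝ)] with R hR
    exact key R hR
  · rw [MeasureTheory.integral_undef hi]
    exact hγ0

end H2Aux

end Aux

open H2Aux


/-- Theorem 2 of the paper (H₂ content): feasibility of the LMIs yields a Hurwitz closed loop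
whose squared H₂ norm is at most `γ`. -/
theorem h2_lmi_closed_loop_bound {nx nu nd nz : ℕ}
    (hnx : 0 < nx) (hnu : 0 < nu) (hnd : 0 < nd) (hnz : 0 < nz)
    (A : Matrix (Fin nx) (Fin nx) ℝ) (Bu : Matrix (Fin nx) (Fin nu) ℝ)
    (Bd : Matrix (Fin nx) (Fin nd) ℝ) (Cz : Matrix (Fin nz) (Fin nx) ℝ)
    (Wd : Matrix (Fin nd) (Fin nd) ℝ) (hWd : Wd.IsDiag) (hWdUnit : IsUnit Wd.det)
    (γ : ℝ) (hγ : 0 < γ)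
    (Y : Matrix (Fin nx) (Fin nx) ℝ) (hY : Y.PosDef)
    (V : Matrix (Fin nu) (Fin nx) ℝ)
    (ω κ : Fin nu → ℝ) (hω : ∀ i, 0 < ω i) (hκ : ∀ i, 0 < κ i)
    (Q₁ : Matrix (Fin nz) (Fin nz) ℝ) (hQ₁ : Q₁.PosSemidef)
    (hLMI1 : (-(fromBlocks
        (Pmat Y A Bu V ω + (Pmat Y A Bu V ω)ᵀ)
        (fromBlocks (Y * Bd) (Y * Bu) 0 0)
        (fromBlocks (Y * Bd) (Y * Bu) 0 0)ᵀ
        (-(fromBlocks (Wd⁻¹ * Wd⁻¹) 0 0 (diagonal κ))))).PosDef)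
    (hLMI2 : (fromBlocks Q₁ (fromCols Cz 0)
        (fromRows Czᵀ 0)
        (fromBlocks Y 0 0 (1 : Matrix (Fin nu) (Fin nu) ℝ))).PosSemidef)
    (htr : Q₁.trace ≤ γ) :
    IsHurwitz (Acl A Bu V ω) ∧
      ∫ t in Set.Ioi (0 : ℝ),
          frobeniusNormSq
            (Ccl (nu := nu) Cz * NormedSpace.exp (t • Acl A Bu V ω) * Bcl Bd Wd Bu κ) ≤ γ := by
  classical
  -- basic invertibility facts
  have hYdet : IsUnit Y.det := isUnit_iff_ne_zero.2 hY.det_pos.ne'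
  have hYY : Y * Y⁻¹ = 1 := Matrix.mul_nonsing_inv Y hYdet
  have hYY' : Y⁻¹ * Y = 1 := Matrix.nonsing_inv_mul Y hYdet
  have hYt : Yᵀ = Y := by
    ext i j
    have h2 := congrFun (congrFun hY.1 i) j
    simpa [Matrix.conjTranspose_apply] using h2
  have hYit : (Y⁻¹)ᵀ = Y⁻¹ := by rw [Matrix.transpose_nonsing_inv, hYt]
  have hdΩ : diagonal ω * (diagonal ω)⁻¹ = 1 := by
    apply Matrix.mul_nonsing_inv
    rw [det_diagonal]
    exact isUnit_iff_ne_zero.2 (Finset.prod_ne_zero_iff.2 fun i _ => (hω i).ne')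
  have hV : diagonal ω * ((diagonal ω)⁻¹ * V) = V := by
    rw [← Matrix.mul_assoc, hdΩ, Matrix.one_mul]
  have hWinv : Wd⁻¹ * Wd = 1 := Matrix.nonsing_inv_mul Wd hWdUnit
  have hWdt : Wdᵀ = Wd := by
    obtain ⟨d, hWdd⟩ : ∃ d, Wd = diagonal d := ⟨Wd.diag, hWd.diagonal_diag.symm⟩
    rw [hWdd, diagonal_transpose]
  have hWW : Wd⁻¹ * Wd⁻¹ * (Wd * Wd) = 1 := by
    calc Wd⁻¹ * Wd⁻¹ * (Wd * Wd) = Wd⁻¹ * (Wd⁻¹ * Wd) * Wd := by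
          simp only [Matrix.mul_assoc]
      _ = 1 := by rw [hWinv, Matrix.mul_one, hWinv]
  have hκ1 : diagonal κ * diagonal (fun i => (κ i)⁻¹) = 1 := by
    rw [diagonal_mul_diagonal, ← diagonal_one]
    exact congrArg diagonal (funext fun i => mul_inv_cancel₀ (hκ i).ne')
  have hKK : (diagonal fun i => (Real.sqrt (κ i))⁻¹) * (diagonal fun i => (Real.sqrt (κ i))⁻¹)
      = diagonal (fun i => (κ i)⁻¹) := by
    rw [diagonal_mul_diagonal]
    refine congrArg diagonal (funext fun i => ?_)
    rw [← mul_inv, Real.mul_self_sqrt (hκ i).le]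
  -- abbreviations
  set Ac : Matrix (Fin nx ⊕ Fin nu) (Fin nx ⊕ Fin nu) ℝ := Acl A Bu V ω with hAc
  set Bc : Matrix (Fin nx ⊕ Fin nu) (Fin nd ⊕ Fin nu) ℝ := Bcl Bd Wd Bu κ with hBc
  set 𝒴 : Matrix (Fin nx ⊕ Fin nu) (Fin nx ⊕ Fin nu) ℝ :=
    fromBlocks Y 0 0 (1 : Matrix (Fin nu) (Fin nu) ℝ) with h𝒴
  set X : Matrix (Fin nx ⊕ Fin nu) (Fin nx ⊕ Fin nu) ℝ :=
    fromBlocks Y⁻¹ 0 0 (1 : Matrix (Fin nu) (Fin nu) ℝ) with hX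
  have h𝒴t : 𝒴ᵀ = 𝒴 := by
    rw [h𝒴, fromBlocks_transpose, hYt, transpose_zero, transpose_zero, transpose_one]
  have hXt : Xᵀ = X := by
    rw [hX, fromBlocks_transpose, hYit, transpose_zero, transpose_zero, transpose_one]
  have h𝒴X : 𝒴 * X = 1 := by
    rw [h𝒴, hX, fromBlocks_multiply]
    simp only [Matrix.mul_zero, Matrix.zero_mul, Matrix.mul_one, Matrix.one_mul,
      add_zero, zero_add, hYY]
    exact fromBlocks_one
  have hX𝒴 : X * 𝒴 = 1 := by
    rw [h𝒴, hX, fromBlocks_multiply]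
    simp only [Matrix.mul_zero, Matrix.zero_mul, Matrix.mul_one, Matrix.one_mul,
      add_zero, zero_add, hYY']
    exact fromBlocks_one
  -- the Lyapunov-type inequality from LMI1
  have hP : 𝒴 * Ac = Pmat Y A Bu V ω := by
    rw [hAc, h𝒴, Acl, Pmat, fromBlocks_multiply]
    simp only [Matrix.mul_zero, Matrix.zero_mul, Matrix.mul_one, Matrix.one_mul,
      add_zero, zero_add, hV]
  have hPP : Pmat Y A Bu V ω + (Pmat Y A Bu V ω)ᵀ = 𝒴 * Ac + Acᵀ * 𝒴 := by
    rw [← hP, transpose_mul, h𝒴t]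
  have hDG : (fromBlocks (Wd⁻¹ * Wd⁻¹) 0 0 (diagonal κ)) *
      (fromBlocks (Wd * Wd) 0 0 (diagonal fun i => (κ i)⁻¹)) = 1 := by
    rw [fromBlocks_multiply]
    simp only [Matrix.mul_zero, Matrix.zero_mul, add_zero, zero_add, hWW, hκ1]
    exact fromBlocks_one
  have e1 : (Bd * Wd) * (Bd * Wd)ᵀ = Bd * (Wd * Wd) * Bdᵀ := by
    rw [transpose_mul, hWdt]
    simp only [Matrix.mul_assoc]
  have e2 : (Bu * diagonal fun i => (Real.sqrt (κ i))⁻¹) *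
      (Bu * diagonal fun i => (Real.sqrt (κ i))⁻¹)ᵀ
      = Bu * (diagonal fun i => (κ i)⁻¹) * Buᵀ := by
    rw [transpose_mul, diagonal_transpose,
      show (Bu * diagonal fun i => (Real.sqrt (κ i))⁻¹) *
          ((diagonal fun i => (Real.sqrt (κ i))⁻¹) * Buᵀ)
          = Bu * ((diagonal fun i => (Real.sqrt (κ i))⁻¹) *
            (diagonal fun i => (Real.sqrt (κ i))⁻¹)) * Buᵀ from by
        simp only [Matrix.mul_assoc], hKK]
  have hBcBc : Bc * Bcᵀ = fromBlocks
      (Bd * (Wd * Wd) * Bdᵀ + Bu * (diagonal fun i => (κ i)⁻¹) * Buᵀ) 0 0 0 := by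
    rw [hBc, Bcl, fromBlocks_transpose, fromBlocks_multiply, e1, e2]
    simp only [Matrix.mul_zero, Matrix.zero_mul, add_zero, zero_add, transpose_zero]
  have hFG : (fromBlocks (Y * Bd) (Y * Bu) 0 0) *
      (fromBlocks (Wd * Wd) 0 0 (diagonal fun i => (κ i)⁻¹)) *
      (fromBlocks (Y * Bd) (Y * Bu) 0 0)ᵀ = 𝒴 * (Bc * Bcᵀ) * 𝒴 := by
    rw [hBcBc, h𝒴, fromBlocks_transpose, fromBlocks_multiply, fromBlocks_multiply,
      fromBlocks_multiply, fromBlocks_multiply]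
    simp only [Matrix.mul_zero, Matrix.zero_mul, add_zero, zero_add, transpose_zero,
      Matrix.mul_one, Matrix.one_mul]
    simp only [Matrix.mul_add, Matrix.add_mul, transpose_mul, hYt, Matrix.mul_assoc]
  have hSchur : qpos (-(𝒴 * Ac + Acᵀ * 𝒴 + 𝒴 * (Bc * Bcᵀ) * 𝒴)) := by
    have h0 := schur_qpos hDG hLMI1.qpos
    rwa [hPP, hFG] at h0
  -- Hurwitz
  have h𝒴pos : qpos 𝒴 := by
    rw [h𝒴]
    exact qpos_fromBlocks hY.qpos (Matrix.PosDef.one (n := Fin nu) (R := ℝ)).qpos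
  have hLyap : qpos (-(𝒴 * Ac + Acᵀ * 𝒴)) := by
    intro x hx
    have h1 := hSchur x hx
    have h2 : 0 ≤ x ⬝ᵥ (𝒴 * (Bc * Bcᵀ) * 𝒴) *ᵥ x := by
      have e : 𝒴 * (Bc * Bcᵀ) * 𝒴 = (𝒴 * Bc) * (𝒴 * Bc)ᵀ := by
        rw [transpose_mul, h𝒴t]
        simp only [Matrix.mul_assoc]
      rw [e]
      exact qnonneg_mul_transpose (𝒴 * Bc) x
    have e2 : x ⬝ᵥ (-(𝒴 * Ac + Acᵀ * 𝒴 + 𝒴 * (Bc * Bcᵀ) * 𝒴)) *ᵥ x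
        = x ⬝ᵥ (-(𝒴 * Ac + Acᵀ * 𝒴)) *ᵥ x - x ⬝ᵥ (𝒴 * (Bc * Bcᵀ) * 𝒴) *ᵥ x := by
      simp only [neg_mulVec, add_mulVec, dotProduct_neg, dotProduct_add]
      ring
    rw [e2] at h1
    linarith
  have hHur : IsHurwitz Ac := isHurwitz_of_lyap h𝒴pos hLyap
  -- the Riccati-type inequality for X
  have hXMX : X * (-(𝒴 * Ac + Acᵀ * 𝒴 + 𝒴 * (Bc * Bcᵀ) * 𝒴)) * X
      = -(Ac * X + X * Acᵀ + Bc * Bcᵀ) := by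
    have t1 : X * (𝒴 * Ac) * X = Ac * X := by
      rw [show X * (𝒴 * Ac) * X = (X * 𝒴) * (Ac * X) by simp only [Matrix.mul_assoc],
        hX𝒴, Matrix.one_mul]
    have t2 : X * (Acᵀ * 𝒴) * X = X * Acᵀ := by
      rw [show X * (Acᵀ * 𝒴) * X = X * Acᵀ * (𝒴 * X) by simp only [Matrix.mul_assoc],
        h𝒴X, Matrix.mul_one]
    have t3 : X * (𝒴 * (Bc * Bcᵀ) * 𝒴) * X = Bc * Bcᵀ := by
      rw [show X * (𝒴 * (Bc * Bcᵀ) * 𝒴) * X = (X * 𝒴) * ((Bc * Bcᵀ) * (𝒴 * X)) by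
        simp only [Matrix.mul_assoc], hX𝒴, h𝒴X, Matrix.one_mul, Matrix.mul_one]
    rw [show X * (-(𝒴 * Ac + Acᵀ * 𝒴 + 𝒴 * (Bc * Bcᵀ) * 𝒴)) * X
        = -(X * (𝒴 * Ac) * X + X * (Acᵀ * 𝒴) * X + X * (𝒴 * (Bc * Bcᵀ) * 𝒴) * X) by
      simp only [Matrix.mul_neg, Matrix.neg_mul, Matrix.mul_add, Matrix.add_mul],
      t1, t2, t3]
  have hSq : qnonneg (-(Ac * X + X * Acᵀ + Bc * Bcᵀ)) := by
    intro x
    rw [← hXMX, quad_congr_mul _ X hXt]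
    exact hSchur.qnonneg _
  have hXq : qnonneg X := by
    rw [hX]
    exact (qpos_fromBlocks hY.inv.qpos (Matrix.PosDef.one (n := Fin nu) (R := ℝ)).qpos).qnonneg
  -- trace bound from LMI2
  have hLMI2' : (fromBlocks Q₁ (fromCols Cz 0) (fromCols Cz 0)ᵀ 𝒴).PosSemidef := by
    rw [show (fromCols Cz (0 : Matrix (Fin nz) (Fin nu) ℝ))ᵀ = fromRows Czᵀ 0 from by
      rw [transpose_fromCols, transpose_zero]]
    exact hLMI2
  have hQle := schur_qle h𝒴X hLMI2'
  have htr2 : ((fromCols Cz 0 : Matrix (Fin nz) (Fin nx ⊕ Fin nu) ℝ) * X *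
      (fromCols Cz 0 : Matrix (Fin nz) (Fin nx ⊕ Fin nu) ℝ)ᵀ).trace ≤ Q₁.trace :=
    trace_le_trace_of_quad hQle
  have hCcl : Ccl (nu := nu) Cz = fromCols Cz 0 := rfl
  refine ⟨hHur, ?_⟩
  have := analytic_main Ac Bc (Ccl (nu := nu) Cz) X hXt hXq hSq γ hγ.le ?_
  · exact this
  · rw [hCcl]
    exact le_trans htr2 htr

end
end

section
/- Let A ∈ ℝ^{n×n} be Hurwitz, B ∈ ℝ^{n×m}, C ∈ ℝ^{p×n}, and let X ∈ ℝ^{n×n} be symmetric positive definite with X·A + Aᵀ·X + X·B·Bᵀ·X negative semidefinite (i.e., −(XA + AᵀX + XBBᵀX) is positive semidefinite). Then ∫₀^∞ ‖C·exp(t·A)·B‖_F² dt ≤ trace(C·X⁻¹·Cᵀ), where ‖·‖_F denotes the Frobenius norm and exp is the matrix exponential. -/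
open Matrix
open scoped Matrix.Norms.L2Operator

noncomputable section

/-- For real matrices, the conjugate transpose is the transpose. -/
lemma RiccatiAux.ct_eq_t {a b : Type*} [Fintype a] [Fintype b] (M : Matrix a b ℝ) : Mᴴ = Mᵀ := by
  ext i j; simp [Matrix.conjTranspose_apply]

/-- The trace of a real positive semidefinite matrix is nonnegative. -/
lemma RiccatiAux.trace_nonneg_of_psd {a : Type*} [Fintype a] [DecidableEq a]
    {M : Matrix a a ℝ} (h : M.PosSemidef) : 0 ≤ M.trace :=
  Finset.sum_nonneg fun i _ => h.diag_nonneg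

/-- The squared Frobenius norm equals the trace of `M * Mᵀ`. -/
lemma RiccatiAux.frobeniusNormSq_eq_trace {a b : Type*} [Fintype a] [Fintype b]
    (M : Matrix a b ℝ) : frobeniusNormSq M = (M * Mᵀ).trace := by
  simp only [frobeniusNormSq, Matrix.trace, Matrix.diag_apply, Matrix.mul_apply,
    Matrix.transpose_apply, sq]

/-- Cycling a sandwich inside the trace. -/
lemma RiccatiAux.tr_sandwich {p n : ℕ} (C : Matrix (Fin p) (Fin n) ℝ)
    (M : Matrix (Fin n) (Fin n) ℝ) : (Cᵀ * C * M).trace = (C * M * Cᵀ).trace := by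
  rw [Matrix.mul_assoc, Matrix.trace_mul_comm]

open RiccatiAux MeasureTheory Filter in
/-- H₂-norm bound: if `X ≻ 0` satisfies the Riccati-type inequality
`XA + AᵀX + XBBᵀX ⪯ 0` and `A` is Hurwitz, then the squared H₂ norm of `(A, B, C)` is at
most `trace (C X⁻¹ Cᵀ)`. -/
theorem h2_riccati_bound {n m p : ℕ}
    (A : Matrix (Fin n) (Fin n) ℝ) (hA : IsHurwitz A)
    (B : Matrix (Fin n) (Fin m) ℝ) (C : Matrix (Fin p) (Fin n) ℝ)
    (X : Matrix (Fin n) (Fin n) ℝ) (hX : X.PosDef)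
    (hRic : (-(X * A + Aᵀ * X + X * B * Bᵀ * X)).PosSemidef) :
    ∫ t in Set.Ioi (0 : ℝ), frobeniusNormSq (C * NormedSpace.exp (t • A) * B)
      ≤ (C * X⁻¹ * Cᵀ).trace := by
  classical
  set Y : Matrix (Fin n) (Fin n) ℝ := X⁻¹ with hYdef
  have hY : Y.PosDef := hX.inv
  have hXdet : IsUnit X.det := isUnit_iff_ne_zero.2 hX.det_pos.ne'
  have hYX : Y * X = 1 := X.nonsing_inv_mul hXdet
  have hXY : X * Y = 1 := X.mul_nonsing_inv hXdet
  set Z : Matrix (Fin n) (Fin n) ℝ := A * Y + Y * Aᵀ + B * Bᵀ with hZdef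
  -- transformed Riccati inequality
  have hS : (-Z).PosSemidef := by
    have h := hRic.mul_mul_conjTranspose_same Y
    have hYH : Yᴴ = Y := hY.isHermitian
    rw [hYH] at h
    have expand : Y * -(X * A + Aᵀ * X + X * B * Bᵀ * X) * Y = -Z := by
      rw [hZdef]
      simp only [Matrix.mul_neg, Matrix.neg_mul, neg_inj]
      simp only [Matrix.mul_add, Matrix.add_mul, ← Matrix.mul_assoc]
      rw [hYX]
      simp only [Matrix.one_mul]
      rw [Matrix.mul_assoc (Y * Aᵀ) X Y, Matrix.mul_assoc (B * Bᵀ) X Y]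
      rw [hXY]
      simp [Matrix.mul_one]
    rwa [expand] at h
  set E : ℝ → Matrix (Fin n) (Fin n) ℝ := fun t => NormedSpace.exp (t • A) with hEdef
  set F : ℝ → Matrix (Fin n) (Fin n) ℝ := fun t => NormedSpace.exp (t • Aᵀ) with hFdef
  have hEF : ∀ t, (E t)ᵀ = F t := fun t => by
    rw [hEdef, hFdef]; simp only; rw [← Matrix.transpose_smul, Matrix.exp_transpose]
  set φ : ℝ → ℝ := fun t => frobeniusNormSq (C * E t * B) with hφdef
  set ψ : ℝ → ℝ := fun t => (Cᵀ * C * (E t * Y * F t)).trace with hψdef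
  set D : ℝ → ℝ := fun t =>
    (Cᵀ * C * ((E t * A * Y) * F t + (E t * Y) * (Aᵀ * F t))).trace with hDdef
  -- pointwise key identity
  have hkey : ∀ t, φ t + D t = ((C * E t) * Z * (C * E t)ᵀ).trace := by
    intro t
    rw [hφdef, hDdef]
    simp only
    rw [frobeniusNormSq_eq_trace, tr_sandwich, ← Matrix.trace_add, ← hEF t]
    congr 1
    simp only [Matrix.transpose_mul, hZdef, Matrix.mul_add, Matrix.add_mul, Matrix.mul_assoc]
    abel
  have hZneg : ∀ t, ((C * E t) * Z * (C * E t)ᵀ).trace ≤ 0 := by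
    intro t
    have h1 : ((C * E t) * (-Z) * (C * E t)ᵀ).PosSemidef := by
      rw [← ct_eq_t]; exact hS.mul_mul_conjTranspose_same (C * E t)
    have h2 := trace_nonneg_of_psd h1
    rw [Matrix.mul_neg, Matrix.neg_mul, Matrix.trace_neg] at h2
    linarith
  have hψnonneg : ∀ t, 0 ≤ ψ t := by
    intro t
    rw [hψdef]; simp only
    rw [tr_sandwich, ← hEF t]
    have h1 : ((C * E t) * Y * (C * E t)ᵀ).PosSemidef := by
      rw [← ct_eq_t]; exact hY.posSemidef.mul_mul_conjTranspose_same (C * E t)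
    have h2 := trace_nonneg_of_psd h1
    convert h2 using 2
    simp only [Matrix.transpose_mul, Matrix.mul_assoc]
  -- derivative of ψ
  have hE' : ∀ t, HasDerivAt E (E t * A) t := fun t => hasDerivAt_exp_smul_const A t
  have hF' : ∀ t, HasDerivAt F (Aᵀ * F t) t := fun t => hasDerivAt_exp_smul_const' Aᵀ t
  have hg : ∀ t, HasDerivAt (fun t => Cᵀ * C * (E t * Y * F t))
      (Cᵀ * C * ((E t * A * Y) * F t + (E t * Y) * (Aᵀ * F t))) t := fun t =>
    (((hE' t).mul_const Y).mul (hF' t)).const_mul (Cᵀ * C)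
  have hψ' : ∀ t, HasDerivAt ψ (D t) t := by
    intro t
    let Tr : Matrix (Fin n) (Fin n) ℝ →L[ℝ] ℝ :=
      LinearMap.toContinuousLinearMap (Matrix.traceLinearMap (Fin n) ℝ ℝ)
    have h := (Tr.hasFDerivAt
      (x := Cᵀ * C * (E t * Y * F t))).comp_hasDerivAt t (hg t)
    simpa [Tr, hψdef, hDdef, Function.comp_def, Matrix.traceLinearMap_apply] using h
  -- continuity
  have hEcont : Continuous E := by
    rw [hEdef]
    exact continuous_iff_continuousAt.2 fun t => (hE' t).continuousAt
  have hFcont : Continuous F := by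
    rw [hFdef]
    exact continuous_iff_continuousAt.2 fun t => (hF' t).continuousAt
  have hφcont : Continuous φ := by
    rw [hφdef]
    have h1 : Continuous fun t => C * E t * B :=
      (continuous_const.matrix_mul hEcont).matrix_mul continuous_const
    have h2 : Continuous fun M : Matrix (Fin p) (Fin m) ℝ => frobeniusNormSq M := by
      unfold frobeniusNormSq
      exact continuous_finset_sum _ fun i _ => continuous_finset_sum _ fun j _ =>
        ((continuous_apply j).comp (continuous_apply i)).pow 2
    exact h2.comp h1
  have hDcont : Continuous D := by
    rw [hDdef]
    apply Continuous.matrix_trace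
    apply Continuous.matrix_mul continuous_const
    apply Continuous.add
    · exact (((hEcont.matrix_mul continuous_const).matrix_mul
        continuous_const).matrix_mul hFcont)
    · exact ((hEcont.matrix_mul continuous_const).matrix_mul
        (continuous_const.matrix_mul hFcont))
  -- bound on finite intervals
  have hbound : ∀ T : ℝ, 0 ≤ T → (∫ t in (0:ℝ)..T, φ t) ≤ ψ 0 := by
    intro T hT
    have hDint : IntervalIntegrable D volume 0 T := hDcont.intervalIntegrable 0 T
    have hφint : IntervalIntegrable φ volume 0 T := hφcont.intervalIntegrable 0 T
    have hftc : (∫ t in (0:ℝ)..T, D t) = ψ T - ψ 0 :=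
      intervalIntegral.integral_eq_sub_of_hasDerivAt (fun t _ => hψ' t) hDint
    have hsum : (0:ℝ) ≤ ∫ t in (0:ℝ)..T, (-(φ t + D t)) := by
      apply intervalIntegral.integral_nonneg hT
      intro u _
      have := (hkey u) ▸ hZneg u
      linarith
    rw [intervalIntegral.integral_neg, intervalIntegral.integral_add hφint hDint] at hsum
    have hψT := hψnonneg T
    linarith [hftc ▸ hsum]
  -- Rewrite ψ 0 as the RHS trace
  have hE0 : E 0 = 1 := by rw [hEdef]; simp [NormedSpace.exp_zero]
  have hF0 : F 0 = 1 := by rw [hFdef]; simp [NormedSpace.exp_zero]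
  have hψ0 : ψ 0 = (C * X⁻¹ * Cᵀ).trace := by
    rw [hψdef]; simp only
    rw [hE0, hF0, Matrix.one_mul, Matrix.mul_one, tr_sandwich, hYdef]
  -- conclusion
  by_cases hint : IntegrableOn φ (Set.Ioi 0) volume
  · have hlim := intervalIntegral_tendsto_integral_Ioi 0 hint tendsto_id
    have hle : (∫ t in Set.Ioi (0:ℝ), φ t) ≤ ψ 0 :=
      le_of_tendsto hlim (Filter.eventually_atTop.2 ⟨0, fun T hT => hbound T hT⟩)
    rwa [hψ0] at hle
  · have : (∫ t in Set.Ioi (0:ℝ), φ t) = 0 := integral_undef hint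
    rw [this, ← hψ0]
    exact hψnonneg 0
end
end

section
/- Let A ∈ ℝ^{n_x×n_x}, B_u ∈ ℝ^{n_x×n_u}, V ∈ ℝ^{n_u×n_x}, let ω_c ∈ ℝ^{n_u} have strictly positive entries, and let Y ∈ ℝ^{n_x×n_x} be symmetric positive definite. With P := [[Y·A, Y·B_u],[V, −diag(ω_c)]], suppose P + Pᵀ is negative definite. Then the closed-loop matrix A_cl := [[A, B_u],[V, −diag(ω_c)]] ∈ ℝ^{(n_x+n_u)×(n_x+n_u)} is Hurwitz. Equivalently, with K := diag(ω_c)⁻¹·V, the matrix [[A, B_u],[diag(ω_c)·K, −diag(ω_c)]] is Hurwitz. -/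
open Matrix

noncomputable section

namespace StructuredLyapunovAux

variable {n : Type*} [Fintype n] [DecidableEq n]

lemma exists_eigenvector (M : Matrix n n ℂ) {μ : ℂ} (h : μ ∈ spectrum ℂ M) :
    ∃ v : n → ℂ, v ≠ 0 ∧ M.mulVec v = μ • v := by
  have h2 : μ ∈ spectrum ℂ (Matrix.toLinAlgEquiv' M) := by
    rwa [AlgEquiv.spectrum_eq]
  have h3 : Module.End.HasEigenvalue (Matrix.toLinAlgEquiv' M) μ :=
    Module.End.HasEigenvalue.of_mem_spectrum h2
  obtain ⟨v, hv⟩ := h3.exists_hasEigenvector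
  refine ⟨v, hv.2, ?_⟩
  have := hv.apply_eq_smul
  simpa using this

omit [DecidableEq n] in
lemma re_quad_pos (S : Matrix n n ℝ) (hS : S.PosDef) {v : n → ℂ} (hv : v ≠ 0) :
    0 < (star v ⬝ᵥ (S.map Complex.ofReal).mulVec v).re := by
  set a : n → ℝ := fun i => (v i).re with ha
  set b : n → ℝ := fun i => (v i).im with hb
  have key : (star v ⬝ᵥ (S.map Complex.ofReal).mulVec v).re
      = a ⬝ᵥ S.mulVec a + b ⬝ᵥ S.mulVec b := by
    simp only [dotProduct, mulVec, Pi.star_apply, map_apply, Complex.re_sum,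
      Finset.mul_sum, ← Finset.sum_add_distrib]
    refine Finset.sum_congr rfl fun i _ => Finset.sum_congr rfl fun j _ => ?_
    simp only [Complex.star_def, Complex.mul_re, Complex.mul_im, Complex.conj_re,
      Complex.conj_im, Complex.ofReal_re, Complex.ofReal_im, ha, hb]
    ring
  rw [key]
  have hab : a ≠ 0 ∨ b ≠ 0 := by
    by_contra hc
    push_neg at hc
    apply hv
    funext i
    have h1 := congrFun hc.1 i
    have h2 := congrFun hc.2 i
    exact Complex.ext h1 h2
  have qa : 0 ≤ a ⬝ᵥ S.mulVec a := by simpa using hS.posSemidef.dotProduct_mulVec_nonneg a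
  have qb : 0 ≤ b ⬝ᵥ S.mulVec b := by simpa using hS.posSemidef.dotProduct_mulVec_nonneg b
  rcases hab with h | h
  · have : 0 < a ⬝ᵥ S.mulVec a := by simpa using hS.dotProduct_mulVec_pos h
    linarith
  · have : 0 < b ⬝ᵥ S.mulVec b := by simpa using hS.dotProduct_mulVec_pos h
    linarith

lemma hurwitz_of_lyapunov (X M : Matrix n n ℝ) (hX : X.PosDef)
    (h : (-(X * M + Mᵀ * X)).PosDef) : IsHurwitz M := by
  intro μ hμ
  obtain ⟨v, hv0, hv⟩ := exists_eigenvector _ hμ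
  set X' : Matrix n n ℂ := X.map Complex.ofReal with hX'
  set M' : Matrix n n ℂ := M.map Complex.ofReal with hM'
  have hq : 0 < (star v ⬝ᵥ X'.mulVec v).re := re_quad_pos X hX hv0
  have hc : 0 < (star v ⬝ᵥ ((-(X * M + Mᵀ * X)).map Complex.ofReal).mulVec v).re :=
    re_quad_pos _ h hv0
  set q : ℂ := star v ⬝ᵥ X'.mulVec v with hqdef
  -- the key algebraic identity
  have hmap : ((X * M + Mᵀ * X)).map (Complex.ofReal) = X' * M' + M'ᵀ * X' := by
    have hring : ∀ (P Q : Matrix n n ℝ),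
        (P * Q).map (Complex.ofReal) = P.map Complex.ofReal * Q.map Complex.ofReal := by
      intro P Q
      exact Matrix.map_mul (f := Complex.ofRealHom)
    simp [Matrix.map_add, hring, hX', hM', Matrix.transpose_map]
  have hstar : M'.mulVec (star v) = star (M'.mulVec v) := by
    funext i
    simp [mulVec, dotProduct, hM', map_sum, Complex.conj_ofReal]
  have key : star v ⬝ᵥ ((X * M + Mᵀ * X).map Complex.ofReal).mulVec v
      = (μ + (starRingEnd ℂ) μ) * q := by
    rw [hmap, Matrix.add_mulVec, dotProduct_add, ← Matrix.mulVec_mulVec, hv,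
      Matrix.mulVec_smul, dotProduct_smul, ← Matrix.mulVec_mulVec,
      dotProduct_mulVec (star v) M'ᵀ, Matrix.vecMul_transpose, hstar, hv]
    have : star (μ • v) ⬝ᵥ X'.mulVec v = (starRingEnd ℂ) μ * q := by
      simp [star_smul, hqdef, smul_dotProduct, smul_eq_mul]
    rw [this, hqdef, smul_eq_mul]
    ring
  have hneg : ((-(X * M + Mᵀ * X)).map Complex.ofReal) =
      -((X * M + Mᵀ * X).map Complex.ofReal) := by
    ext i j
    simp
  rw [hneg] at hc
  have hc2 : 0 < (-( (μ + (starRingEnd ℂ) μ) * q)).re := by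
    rw [← key]
    simpa [Matrix.neg_mulVec] using hc
  have hsum : μ + (starRingEnd ℂ) μ = ((2 * μ.re : ℝ) : ℂ) := Complex.add_conj μ
  rw [hsum] at hc2
  have : (-(((2 * μ.re : ℝ) : ℂ) * q)).re = -(2 * μ.re * q.re) := by
    simp [Complex.neg_re, Complex.re_ofReal_mul]
  rw [this] at hc2
  nlinarith

end StructuredLyapunovAux

/-- Structured Lyapunov argument of the paper: with `P = [[Y·A, Y·B_u],[V, −diag(ω_c)]]`,
negative definiteness of `P + Pᵀ` certifies that the closed-loop matrix
`[[A, B_u],[V, −diag(ω_c)]]` is Hurwitz; equivalently, with `K = diag(ω_c)⁻¹·V`, the matrix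
`[[A, B_u],[diag(ω_c)·K, −diag(ω_c)]]` is Hurwitz. -/
theorem structured_lyapunov_closed_loop {nx nu : ℕ}
    (A : Matrix (Fin nx) (Fin nx) ℝ) (Bu : Matrix (Fin nx) (Fin nu) ℝ)
    (V : Matrix (Fin nu) (Fin nx) ℝ)
    (ω : Fin nu → ℝ) (hω : ∀ i, 0 < ω i)
    (Y : Matrix (Fin nx) (Fin nx) ℝ) (hY : Y.PosDef)
    (hP : (-(fromBlocks (Y * A) (Y * Bu) V (-(diagonal ω)) +
        (fromBlocks (Y * A) (Y * Bu) V (-(diagonal ω)))ᵀ)).PosDef) :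
    IsHurwitz (fromBlocks A Bu V (-(diagonal ω))) ∧
      IsHurwitz (fromBlocks A Bu (diagonal ω * ((diagonal ω)⁻¹ * V)) (-(diagonal ω))) := by
  classical
  set X : Matrix (Fin nx ⊕ Fin nu) (Fin nx ⊕ Fin nu) ℝ := fromBlocks Y 0 0 1 with hXdef
  set M : Matrix (Fin nx ⊕ Fin nu) (Fin nx ⊕ Fin nu) ℝ :=
    fromBlocks A Bu V (-(diagonal ω)) with hMdef
  -- X is positive definite
  have hX : X.PosDef := by
    apply Matrix.PosDef.of_dotProduct_mulVec_pos
    · show Xᴴ = X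
      rw [hXdef, Matrix.conjTranspose_eq_transpose_of_trivial, fromBlocks_transpose,
        Matrix.transpose_zero, Matrix.transpose_zero, Matrix.transpose_one,
        ← Matrix.conjTranspose_eq_transpose_of_trivial, hY.1]
    · intro x hx
      have hsplit : star x ⬝ᵥ X.mulVec x =
          (x ∘ Sum.inl) ⬝ᵥ Y.mulVec (x ∘ Sum.inl) + (x ∘ Sum.inr) ⬝ᵥ (x ∘ Sum.inr) := by
        simp [hXdef, fromBlocks_mulVec, dotProduct, Fintype.sum_sum_type,
          Matrix.one_mulVec, Matrix.zero_mulVec, Function.comp, mulVec,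
          Matrix.one_apply, ite_mul, mul_ite, Finset.sum_ite_eq, Finset.sum_ite_eq']
      rw [hsplit]
      have h2 : 0 ≤ (x ∘ Sum.inr) ⬝ᵥ (x ∘ Sum.inr) := by
        simpa [dotProduct] using Finset.sum_nonneg fun i _ => mul_self_nonneg (x (Sum.inr i))
      have h1 : 0 ≤ (x ∘ Sum.inl) ⬝ᵥ Y.mulVec (x ∘ Sum.inl) := by
        simpa using hY.posSemidef.dotProduct_mulVec_nonneg (x ∘ Sum.inl)
      rcases eq_or_ne (x ∘ Sum.inl) 0 with hl | hl
      · have hr : (x ∘ Sum.inr) ≠ 0 := by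
          intro hr
          apply hx
          funext i
          cases i with
          | inl i => exact congrFun hl i
          | inr i => exact congrFun hr i
        have : 0 < (x ∘ Sum.inr) ⬝ᵥ (x ∘ Sum.inr) := by
          simpa using dotProduct_self_star_pos_iff.mpr hr
        linarith
      · have : 0 < (x ∘ Sum.inl) ⬝ᵥ Y.mulVec (x ∘ Sum.inl) := by
          simpa using hY.dotProduct_mulVec_pos hl
        linarith
  -- Lyapunov inequality
  have hXM : X * M = fromBlocks (Y * A) (Y * Bu) V (-(diagonal ω)) := by
    simp [hXdef, hMdef, fromBlocks_multiply]
  have hMX : Mᵀ * X = (fromBlocks (Y * A) (Y * Bu) V (-(diagonal ω)))ᵀ := by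
    have hXsymm : Xᵀ = X := by
      rw [hXdef, fromBlocks_transpose, Matrix.transpose_zero, Matrix.transpose_zero,
        Matrix.transpose_one, ← Matrix.conjTranspose_eq_transpose_of_trivial, hY.1]
    rw [← hXM, Matrix.transpose_mul, hXsymm]
  have hLyap : (-(X * M + Mᵀ * X)).PosDef := by
    rw [hXM, hMX]; exact hP
  have hHur : IsHurwitz M := StructuredLyapunovAux.hurwitz_of_lyapunov X M hX hLyap
  have hVeq : diagonal ω * ((diagonal ω)⁻¹ * V) = V := by
    apply Matrix.mul_nonsing_inv_cancel_left
    rw [Matrix.det_diagonal]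
    exact IsUnit.mk0 _ (Finset.prod_ne_zero_iff.mpr fun i _ => (hω i).ne')
  exact ⟨hHur, by rw [hVeq]; exact hHur⟩
end
end
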